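/- arXiv:2106.08475 — 11 statements merged into one kernel-verified Lean document; each statement's English description precedes it below -/
import Mathlib

section
/- Let p be an odd prime and let x be a natural number with 0 < x and 2x < p (so x represents a positive field element). Then the number of masks t ∈ {0, 1, …, p−1} such that (x + t) mod p ≤ t equals x. Hence, for a mask chosen uniformly at random from {0,…,p−1}, the stochastic sign test incorrectly declares the positive value x 'negative' with probability exactly x/p. -/
/-- For an odd prime `p` and a positive field value `x` (i.e. `0 < x`, `2x < p`),
the number of masks `t ∈ {0,…,p-1}` on which the stochastic sign test wrongly
declares `x` negative, i.e. `(x + t) % p ≤ t`, equals `x`.  Hence for a uniform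
mask the fault probability is exactly `x / p`. -/
theorem stochastic_sign_fault_count_pos (p x : ℕ) (hp : Nat.Prime p) (hodd : Odd p)
    (hx : 0 < x) (hxp : 2 * x < p) :
    ((Finset.range p).filter (fun t => (x + t) % p ≤ t)).card = x := by
  have hxlt : x < p := by omega
  have h : (Finset.range p).filter (fun t => (x + t) % p ≤ t) = Finset.Ico (p - x) p := by
    ext t
    simp only [Finset.mem_filter, Finset.mem_range, Finset.mem_Ico]
    constructor
    · rintro ⟨ht, hmod⟩
      refine ⟨?_, ht⟩
      by_contra hlt
      push_neg at hlt
      have : x + t < p := by omega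
      rw [Nat.mod_eq_of_lt this] at hmod
      omega
    · rintro ⟨hge, ht⟩
      refine ⟨ht, ?_⟩
      have h1 : x + t - p < p := by omega
      have : (x + t) % p = x + t - p := by
        rw [Nat.mod_eq_sub_mod (by omega), Nat.mod_eq_of_lt h1]
      omega
  rw [h, Nat.card_Ico]
  omega
end

section
/- Let p be an odd prime and let x be a natural number with 2x > p and x < p (so x represents a negative field element, with magnitude |x| = p − x). Then the number of masks t ∈ {0, 1, …, p−1} such that t < (x + t) mod p equals p − x. Hence, for a mask chosen uniformly at random from {0,…,p−1}, the stochastic sign test incorrectly declares the negative value x 'nonnegative' with probability exactly (p − x)/p = |x|/p. -/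
/-- For an odd prime `p` and a negative field value `x` (i.e. `2x > p`, `x < p`,
with magnitude `|x| = p - x`), the number of masks `t ∈ {0,…,p-1}` on which the
stochastic sign test wrongly declares `x` nonnegative, i.e. `t < (x + t) % p`,
equals `p - x`.  Hence for a uniform mask the fault probability is `(p-x)/p`. -/
theorem stochastic_sign_fault_count_neg (p x : ℕ) (hp : Nat.Prime p) (hodd : Odd p)
    (hxp : p < 2 * x) (hx : x < p) :
    ((Finset.range p).filter (fun t => t < (x + t) % p)).card = p - x := by
  have hx0 : 0 < x := by omega
  have heq : (Finset.range p).filter (fun t => t < (x + t) % p)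
      = Finset.range (p - x) := by
    ext t
    simp only [Finset.mem_filter, Finset.mem_range]
    constructor
    · rintro ⟨ht, hlt⟩
      by_contra h
      push_neg at h
      have h1 : (x + t) % p = x + t - p := by
        rw [Nat.mod_eq_sub_mod (by omega), Nat.mod_eq_of_lt (by omega)]
      omega
    · intro h
      have h1 : (x + t) % p = x + t := Nat.mod_eq_of_lt (by omega)
      constructor <;> omega
  rw [heq, Finset.card_range]
end

section
/- Let p be an odd prime and let x be a natural number with 0 < x < p. The number of masks t ∈ {0, 1, …, p−1} for which the stochastic sign test faults — i.e., the truth value of '(x + t) mod p ≤ t' differs from the truth value of '2x > p' — equals min(x, p − x) = |x|. -/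
/-- For an odd prime `p` and a field value `0 < x < p`, the number of masks
`t ∈ {0,…,p-1}` on which the stochastic sign test faults — i.e. the truth value
of `(x + t) % p ≤ t` differs from the truth value of `2x > p` — equals
`min x (p - x) = |x|`. -/
theorem stochastic_sign_fault_count (p x : ℕ) (hp : Nat.Prime p) (hodd : Odd p)
    (hx : 0 < x) (hxp : x < p) :
    ((Finset.range p).filter
      (fun t => ¬(((x + t) % p ≤ t) ↔ p < 2 * x))).card = min x (p - x) := by
  have key : ∀ t, t < p → (((x + t) % p ≤ t) ↔ (p ≤ x + t)) := by
    intro t ht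
    constructor
    · intro h
      by_contra hlt
      push_neg at hlt
      rw [Nat.mod_eq_of_lt hlt] at h
      omega
    · intro h
      have hmod : (x + t) % p = x + t - p := by
        rw [Nat.mod_eq_sub_mod h, Nat.mod_eq_of_lt (by omega)]
      omega
  by_cases h2 : p < 2 * x
  · have hset : ((Finset.range p).filter
        (fun t => ¬(((x + t) % p ≤ t) ↔ p < 2 * x))) = Finset.range (p - x) := by
      ext t
      simp only [Finset.mem_filter, Finset.mem_range]
      constructor
      · rintro ⟨ht, hne⟩
        have := key t ht
        omega
      · intro ht
        have htp : t < p := by omega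
        have := key t htp
        constructor
        · exact htp
        · omega
    rw [hset, Finset.card_range]
    omega
  · have hset : ((Finset.range p).filter
        (fun t => ¬(((x + t) % p ≤ t) ↔ p < 2 * x))) = Finset.Ico (p - x) p := by
      ext t
      simp only [Finset.mem_filter, Finset.mem_range, Finset.mem_Ico]
      constructor
      · rintro ⟨ht, hne⟩
        have := key t ht
        omega
      · rintro ⟨h1, ht⟩
        have := key t ht
        constructor
        · exact ht
        · omega
    rw [hset, Nat.card_Ico]
    omega
end

section
/- Let p be an odd prime and let x be a natural number with 0 < x < p. If t is drawn uniformly at random from {0, 1, …, p−1} (e.g., via the uniform probability mass function on Fin p), then the probability of the event { t : the truth value of '(x + t) mod p ≤ t' differs from the truth value of '2x > p' } equals min(x, p − x) / p as a real (or rational) number. -/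
lemma card_lt_aux (p k : ℕ) (h : k ≤ p) : Nat.card {t : Fin p // t.val < k} = k := by
  rw [Nat.card_eq_of_bijective (fun t => (⟨t.1.val, t.2⟩ : Fin k))]
  · simp
  constructor
  · rintro ⟨⟨a,ha⟩,ha'⟩ ⟨⟨b,hb⟩,hb'⟩ hab
    simp_all [Fin.ext_iff]
  · rintro ⟨i, hi⟩
    exact ⟨⟨⟨i, lt_of_lt_of_le hi h⟩, hi⟩, rfl⟩

lemma card_ge_aux (p k : ℕ) (h : k ≤ p) : Nat.card {t : Fin p // k ≤ t.val} = p - k := by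
  rw [Nat.card_eq_of_bijective
    (fun t => (⟨t.1.val - k, by have := t.1.2; have := t.2; omega⟩ : Fin (p - k)))]
  · simp
  constructor
  · intro t u hab
    have h1 := congrArg Fin.val hab
    simp only at h1
    have h2 := t.2; have h3 := u.2
    have h4 := t.1.2; have h5 := u.1.2
    apply Subtype.ext; apply Fin.ext
    omega
  · rintro ⟨i, hi⟩
    exact ⟨⟨⟨i + k, by omega⟩, by simp⟩, by simp⟩

/-- For an odd prime `p` and a field value `0 < x < p`, if a mask `t` is drawn
uniformly at random from `Fin p`, the probability that the stochastic sign test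
faults — i.e. the truth value of `(x + t) % p ≤ t` differs from the truth value
of `2x > p` — equals `min x (p - x) / p` as a real number. -/
theorem stochastic_sign_fault_prob (p x : ℕ) (hp : Nat.Prime p) (hodd : Odd p)
    (hx : 0 < x) (hxp : x < p) :
    letI : NeZero p := ⟨hp.ne_zero⟩
    ((PMF.uniformOfFintype (Fin p)).toOuterMeasure
        {t : Fin p | ¬(((x + t.val) % p ≤ t.val) ↔ p < 2 * x)}).toReal
      = (min x (p - x) : ℝ) / p := by
  haveI : NeZero p := ⟨hp.ne_zero⟩
  have hp0 : (0:ℝ) < p := by exact_mod_cast hp.pos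
  have hkey : ∀ t : Fin p, ((x + t.val) % p ≤ t.val ↔ p ≤ x + t.val) := by
    intro t
    rcases lt_or_ge (x + t.val) p with h | h
    · rw [Nat.mod_eq_of_lt h]; omega
    · have hm : (x + t.val) % p = x + t.val - p := by
        rw [Nat.mod_eq_sub_mod h, Nat.mod_eq_of_lt (by have := t.2; omega)]
      rw [hm]; have := t.2; omega
  have h2x : 2 * x ≠ p := by
    rcases hodd with ⟨k, hk⟩; omega
  rcases lt_or_ge p (2 * x) with hB | hB
  · have hset : {t : Fin p | ¬(((x + t.val) % p ≤ t.val) ↔ p < 2 * x)}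
        = {t : Fin p | t.val < p - x} := by
      ext t
      simp only [Set.mem_setOf_eq, hkey t, hB, iff_true]
      omega
    rw [hset, PMF.toOuterMeasure_uniformOfFintype_apply]
    simp only [Set.coe_setOf, Fintype.card_eq_nat_card]
    rw [card_lt_aux p (p - x) (by omega), Nat.card_eq_fintype_card, Fintype.card_fin,
      ENNReal.toReal_div, ENNReal.toReal_natCast, ENNReal.toReal_natCast]
    have hr : (p:ℝ) < 2 * x := by exact_mod_cast hB
    rw [min_eq_right (by linarith), Nat.cast_sub hxp.le]
  · have hset : {t : Fin p | ¬(((x + t.val) % p ≤ t.val) ↔ p < 2 * x)}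
        = {t : Fin p | p - x ≤ t.val} := by
      ext t
      simp only [Set.mem_setOf_eq, hkey t, hB.not_gt, iff_false, not_not]
      omega
    rw [hset, PMF.toOuterMeasure_uniformOfFintype_apply]
    simp only [Set.coe_setOf, Fintype.card_eq_nat_card]
    have hcard : Nat.card {t : Fin p // p - x ≤ t.val} = x := by
      rw [card_ge_aux p (p - x) (by omega)]; omega
    rw [hcard, Nat.card_eq_fintype_card, Fintype.card_fin,
      ENNReal.toReal_div, ENNReal.toReal_natCast, ENNReal.toReal_natCast]
    have hr : 2 * (x:ℝ) ≤ p := by exact_mod_cast hB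
    rw [min_eq_left (by linarith)]
end

section
/- Let x, t, k be natural numbers with 2^k ≤ x. Then ⌊t / 2^k⌋ < ⌊(x + t) / 2^k⌋. Consequently, for a positive field value x with magnitude at least 2^k, whenever the stochastic sign test is correct (no modular overflow, so ⟨x⟩_s = x + t), the truncated stochastic sign test is also correct, i.e. truncation by k bits introduces no additional faults for positive inputs of magnitude at least 2^k. -/
theorem Nat.div_lt_add_div_of_le {n x : ℕ} (t : ℕ) (hn : 0 < n) (hx : n ≤ x) :
    t / n < (x + t) / n :=
  calc t / n < t / n + 1 := Nat.lt_succ_self _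
    _ = (t + n) / n := (Nat.add_div_right t hn).symm
    _ ≤ (x + t) / n := Nat.div_le_div_right (by omega)

/-- If `2^k ≤ x` then `⌊t / 2^k⌋ < ⌊(x + t) / 2^k⌋`: for a positive field value
of magnitude at least `2^k`, whenever the stochastic sign test is correct (no
modular overflow, so the server's share is `x + t`), the `k`-bit truncated test
is also correct. -/
theorem truncated_sign_no_new_fault_pos_large (x t k : ℕ) (hx : 2 ^ k ≤ x) :
    t / 2 ^ k < (x + t) / 2 ^ k :=
  Nat.div_lt_add_div_of_le t (Nat.two_pow_pos k) hx
end

section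
/- Let k be a natural number and x a natural number with 0 < x < 2^k. Then for every natural number t: ⌊(x + t) / 2^k⌋ = ⌊t / 2^k⌋ if and only if t mod 2^k < 2^k − x. Consequently, for a small positive field value x ∈ (0, 2^k) and a mask t without modular overflow, the truncated stochastic sign test faults (declares x 'negative') exactly when t mod 2^k < 2^k − x. -/
-- Adding `x` to `t = n * (t / n) + t % n` carries into the quotient exactly when `n ≤ x + t % n`.
theorem Nat.add_div_eq_div_iff_mod_lt_sub {n : ℕ} (hn : 0 < n) (x t : ℕ) :
    (x + t) / n = t / n ↔ t % n < n - x := by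
  have hsplit : (x + t) / n = (x + t % n) / n + t / n := by
    conv_lhs => rw [← Nat.mod_add_div t n, ← add_assoc, Nat.add_mul_div_left _ _ hn]
  rw [hsplit, Nat.add_eq_right, Nat.div_eq_zero_iff_lt hn, Nat.lt_sub_iff_add_lt']

theorem truncated_sign_fault_iff_pos_small_general (k x : ℕ) :
    ∀ t : ℕ, (x + t) / 2 ^ k = t / 2 ^ k ↔ t % 2 ^ k < 2 ^ k - x :=
  Nat.add_div_eq_div_iff_mod_lt_sub (Nat.two_pow_pos k) x

/-- For `0 < x < 2^k` and any mask `t`, the `k`-bit truncations of `x + t` and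
`t` agree, `⌊(x + t) / 2^k⌋ = ⌊t / 2^k⌋`, iff `t % 2^k < 2^k - x`.  This
characterizes exactly when the truncated stochastic sign test (PosZero mode)
faults on a small positive value `x`. -/
theorem truncated_sign_fault_iff_pos_small (k x : ℕ) (hx : 0 < x) (hxk : x < 2 ^ k) :
    ∀ t : ℕ, (x + t) / 2 ^ k = t / 2 ^ k ↔ t % 2 ^ k < 2 ^ k - x :=
  truncated_sign_fault_iff_pos_small_general k x
end

section
/- Let k be a natural number and y a natural number with 0 < y < 2^k. Then for every natural number t with y ≤ t: ⌊(t − y) / 2^k⌋ = ⌊t / 2^k⌋ if and only if y ≤ t mod 2^k. Consequently, in the NegPass variant, a small negative field value of magnitude y ∈ (0, 2^k) is incorrectly passed through (declared 'nonnegative' by the truncated test) exactly when y ≤ t mod 2^k, which for a uniform mask happens with probability (2^k − y)/2^k. -/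
/-- For `0 < y < 2^k` and any mask `t` with `y ≤ t`, the `k`-bit truncations of
`t - y` and `t` agree, `⌊(t - y) / 2^k⌋ = ⌊t / 2^k⌋`, iff `y ≤ t % 2^k`.  In the
NegPass variant this characterizes exactly when a small negative field value of
magnitude `y` is incorrectly passed through the truncated sign test. -/
theorem truncated_sign_fault_iff_negpass (k y : ℕ) (hy : 0 < y) (hyk : y < 2 ^ k) :
    ∀ t : ℕ, y ≤ t → ((t - y) / 2 ^ k = t / 2 ^ k ↔ y ≤ t % 2 ^ k) := by
  intro t ht
  have he0 : 0 < 2 ^ k := pow_pos (by norm_num) k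
  obtain ⟨q, r, hrlt, rfl⟩ : ∃ q r, r < 2 ^ k ∧ t = 2 ^ k * q + r :=
    ⟨t / 2 ^ k, t % 2 ^ k, Nat.mod_lt _ he0, (Nat.div_add_mod t (2 ^ k)).symm⟩
  rw [Nat.mul_add_div he0, Nat.div_eq_of_lt hrlt, Nat.mul_add_mod,
    Nat.mod_eq_of_lt hrlt]
  rcases le_or_gt y r with h | h
  · have ht' : 2 ^ k * q + r - y = 2 ^ k * q + (r - y) := by omega
    rw [ht', Nat.mul_add_div he0, Nat.div_eq_of_lt (by omega)]
    omega
  · have hq : q ≠ 0 := by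
      rintro rfl
      simp only [Nat.mul_zero, Nat.zero_add] at ht
      omega
    have h3 : 2 ^ k ≤ 2 ^ k * q := Nat.le_mul_of_pos_right _ (Nat.pos_of_ne_zero hq)
    have h2 : 2 ^ k * (q - 1) = 2 ^ k * q - 2 ^ k := by
      rw [Nat.mul_sub, Nat.mul_one]
    have ht' : 2 ^ k * q + r - y = 2 ^ k * (q - 1) + (2 ^ k + r - y) := by omega
    rw [ht', Nat.mul_add_div he0, Nat.div_eq_of_lt (by omega)]
    omega
end

section
/- Let k, m be natural numbers and x a natural number with 0 < x < 2^k. Then the number of t ∈ {0, 1, …, m·2^k − 1} with ⌊(x + t)/2^k⌋ = ⌊t/2^k⌋ equals m·(2^k − x). Hence, for t uniform on a range that is a whole number of truncation blocks, the truncation fault probability for the small positive value x is exactly (2^k − x)/2^k. -/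
/-!
Adding `x` to `t` keeps the block index `t / 2^k` exactly when the offset `t % 2^k` is below
`2^k - x`, and each of the `m` blocks of `range (m * 2^k)` contains `2^k - x` such offsets.
-/

open Finset

namespace Nat

theorem add_div_eq_div_iff_mod_add_lt {n : ℕ} (hn : 0 < n) (x t : ℕ) :
    (x + t) / n = t / n ↔ t % n + x < n := by
  have hsplit : (x + t) / n = (t % n + x) / n + t / n := by
    conv_lhs => rw [← Nat.mod_add_div t n]
    rw [← Nat.add_mul_div_left _ _ hn]
    ring_nf
  rw [hsplit, Nat.add_eq_right, Nat.div_eq_zero_iff_lt hn]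

theorem card_filter_range_mul_mod (p : ℕ → Prop) [DecidablePred p] (m n : ℕ) :
    #{t ∈ range (m * n) | p (t % n)} = m * #{r ∈ range n | p r} := by
  induction m with
  | zero => simp
  | succ m ih =>
    have hblock : #{t ∈ (range n).map (addLeftEmbedding (m * n)) | p (t % n)} =
        #{r ∈ range n | p r} := by
      rw [filter_map, card_map]
      refine congrArg card (filter_congr fun r hr => ?_)
      simp [Nat.mod_eq_of_lt (mem_range.mp hr)]
    have hdisj : Disjoint (range (m * n)) ((range n).map (addLeftEmbedding (m * n))) := by
      simp only [disjoint_left, mem_range, mem_map, addLeftEmbedding_apply]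
      omega
    rw [Nat.succ_mul, range_add, filter_union,
      card_union_of_disjoint (disjoint_filter_filter hdisj), ih, hblock, Nat.succ_mul]

theorem card_filter_range_add_lt (n x : ℕ) : #{r ∈ range n | r + x < n} = n - x := by
  rw [← card_range (n - x)]
  congr 1
  ext r
  simp only [mem_filter, mem_range]
  omega

end Nat

theorem truncated_fault_count_blocks_general (k m x : ℕ) :
    ((Finset.range (m * 2 ^ k)).filter
      (fun t => (x + t) / 2 ^ k = t / 2 ^ k)).card = m * (2 ^ k - x) := by
  have hfault : ∀ t ∈ range (m * 2 ^ k),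
      (x + t) / 2 ^ k = t / 2 ^ k ↔ t % 2 ^ k + x < 2 ^ k :=
    fun t _ => Nat.add_div_eq_div_iff_mod_add_lt (by positivity) x t
  rw [filter_congr hfault, Nat.card_filter_range_mul_mod (· + x < 2 ^ k),
    Nat.card_filter_range_add_lt]

/-- For `0 < x < 2^k`, the number of masks `t ∈ {0,…, m·2^k - 1}` on which the
`k`-bit truncated stochastic sign test faults on the small positive value `x`,
i.e. `⌊(x + t)/2^k⌋ = ⌊t/2^k⌋`, equals `m · (2^k - x)`.  Hence for a uniform
mask on a whole number of truncation blocks, the fault probability is exactly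
`(2^k - x) / 2^k`. -/
theorem truncated_fault_count_blocks (k m x : ℕ) (hx : 0 < x) (hxk : x < 2 ^ k) :
    ((Finset.range (m * 2 ^ k)).filter
      (fun t => (x + t) / 2 ^ k = t / 2 ^ k)).card = m * (2 ^ k - x) :=
  truncated_fault_count_blocks_general k m x
end

section
/- Let p be an odd prime, k a natural number, and x a natural number with 0 < x < 2^k and 2x < p. Then the number of masks t ∈ {0, 1, …, p − x − 1} (exactly those masks on which the unt runcated stochastic sign is correct for the positive value x) satisfying ⌊(x + t)/2^k⌋ = ⌊t/2^k⌋ equals ⌊(p − x)/2^k⌋ · (2^k − x) + min((p − x) mod 2^k, 2^k − x). -/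
/-! Writing `t = q·2^k + r` with `r < 2^k`, adding `x` leaves the quotient unchanged exactly when
`r < 2^k - x`. So the fault masks are those whose residue mod `2^k` lies in `[0, 2^k - x)`, and
among `0, …, N - 1` each of the `N / 2^k` complete blocks of residues contributes `2^k - x` of
them, the incomplete last block `min (N % 2^k) (2^k - x)`. -/

namespace Nat

theorem add_div_eq_div_iff_mod_lt_sub_s11 {m : ℕ} (hm : 0 < m) (x t : ℕ) :
    (x + t) / m = t / m ↔ t % m < m - x := by
  have hdecomp : x + t = (x + t % m) + m * (t / m) := by
    have := Nat.mod_add_div t m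
    omega
  rw [hdecomp, Nat.add_mul_div_left _ _ hm, Nat.add_eq_right, Nat.div_eq_zero_iff]
  omega

theorem div_mul_add_min_mod_succ {m : ℕ} (hm : 0 < m) {c : ℕ} (hc : c ≤ m) (n : ℕ) :
    (n + 1) / m * c + min ((n + 1) % m) c
      = n / m * c + min (n % m) c + if n % m < c then 1 else 0 := by
  have hn : n % m + m * (n / m) = n := Nat.mod_add_div n m
  have hr : n % m < m := Nat.mod_lt n hm
  by_cases hwrap : n % m + 1 = m
  · obtain ⟨hdiv, hmod⟩ : (n + 1) / m = n / m + 1 ∧ (n + 1) % m = 0 :=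
      (Nat.div_mod_unique hm).2 ⟨by rw [Nat.mul_succ]; omega, hm⟩
    rw [hdiv, hmod, Nat.succ_mul]
    split_ifs <;> omega
  · obtain ⟨hdiv, hmod⟩ : (n + 1) / m = n / m ∧ (n + 1) % m = n % m + 1 :=
      (Nat.div_mod_unique hm).2 ⟨by omega, by omega⟩
    rw [hdiv, hmod]
    split_ifs <;> omega

theorem card_filter_range_mod_lt {m : ℕ} (hm : 0 < m) {c : ℕ} (hc : c ≤ m) (N : ℕ) :
    ((Finset.range N).filter (fun t => t % m < c)).card = N / m * c + min (N % m) c := by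
  rw [Finset.card_filter]
  induction N with
  | zero => simp
  | succ n ih => rw [Finset.sum_range_succ, ih, div_mul_add_min_mod_succ hm hc]

end Nat

theorem truncated_fault_count_conditional_general (p k x : ℕ) :
    ((Finset.range (p - x)).filter
      (fun t => (x + t) / 2 ^ k = t / 2 ^ k)).card
      = ((p - x) / 2 ^ k) * (2 ^ k - x) + min ((p - x) % 2 ^ k) (2 ^ k - x) := by
  have hpow : 0 < 2 ^ k := Nat.two_pow_pos k
  simp_rw [Nat.add_div_eq_div_iff_mod_lt_sub_s11 hpow x]
  exact Nat.card_filter_range_mod_lt hpow (Nat.sub_le _ _) (p - x)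

/-- For an odd prime `p` and a small positive field value `x` (`0 < x < 2^k`,
`2x < p`), among the masks `t ∈ {0,…, p - x - 1}` (exactly those on which the
untruncated stochastic sign is correct for `x`), the number satisfying the
truncation fault condition `⌊(x + t)/2^k⌋ = ⌊t/2^k⌋` equals
`⌊(p - x)/2^k⌋ · (2^k - x) + min ((p - x) % 2^k) (2^k - x)`. -/
theorem truncated_fault_count_conditional (p k x : ℕ) (hp : Nat.Prime p)
    (hodd : Odd p) (hx : 0 < x) (hxk : x < 2 ^ k) (hxp : 2 * x < p) :
    ((Finset.range (p - x)).filter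
      (fun t => (x + t) / 2 ^ k = t / 2 ^ k)).card
      = ((p - x) / 2 ^ k) * (2 ^ k - x) + min ((p - x) % 2 ^ k) (2 ^ k - x) :=
  truncated_fault_count_conditional_general p k x
end

section
/- Let p be an odd prime, k a natural number, and x a natural number with 0 < x < 2^k and 2x < p. Then for every mask t < p: ⌊((x + t) mod p)/2^k⌋ ≤ ⌊t/2^k⌋ if and only if (p − x ≤ t) or (t mod 2^k < 2^k − x). In other words, the k-bit truncated stochastic sign test (PosZero mode) incorrectly declares the small positive value x 'negative' exactly for those masks that either cause modular overflow (the Theorem 1 fault) or whose low k bits satisfy t mod 2^k < 2^k − x (the Theorem 2 truncation fault). -/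
/-!
Without overflow the test compares `⌊(x + t)/2^k⌋` with `⌊t/2^k⌋`; writing `t = 2^k q + r`, these
agree exactly when adding `x` to the low bits `r` does not carry into bit `k`. With overflow the
reduced share is `x + t - p ≤ t`, so the test always fires.
-/

theorem Nat.add_div_le_div_iff {d : ℕ} (hd : 0 < d) (x t : ℕ) :
    (x + t) / d ≤ t / d ↔ x + t % d < d := by
  have hsplit : x + t = d * (t / d) + (x + t % d) := by
    have := Nat.div_add_mod t d
    omega
  rw [hsplit, Nat.mul_add_div hd, add_le_iff_nonpos_right, Nat.le_zero,
    Nat.div_eq_zero_iff_lt hd]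

theorem Nat.add_mod_eq_sub_of_le {p x t : ℕ} (hx : x ≤ p) (ht : t < p) (h : p ≤ x + t) :
    (x + t) % p = x + t - p := by
  rw [Nat.mod_eq_sub_mod h, Nat.mod_eq_of_lt (by omega)]

theorem truncated_sign_full_fault_set_general (p k x : ℕ) (hxp : 2 * x < p) :
    ∀ t : ℕ, t < p →
      (((x + t) % p) / 2 ^ k ≤ t / 2 ^ k ↔ p - x ≤ t ∨ t % 2 ^ k < 2 ^ k - x) := by
  intro t ht
  by_cases hoverflow : p - x ≤ t
  · have hreduced : (x + t) % p ≤ t := by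
      rw [Nat.add_mod_eq_sub_of_le (by omega) ht (by omega)]
      omega
    exact iff_of_true (Nat.div_le_div_right hreduced) (Or.inl hoverflow)
  · rw [Nat.mod_eq_of_lt (by omega), Nat.add_div_le_div_iff (Nat.two_pow_pos k)]
    omega

/-- For an odd prime `p` and a small positive field value `x` (`0 < x < 2^k`,
`2x < p`), the `k`-bit truncated stochastic sign test (PosZero mode) declares
`x` negative, i.e. `⌊((x + t) % p)/2^k⌋ ≤ ⌊t/2^k⌋`, exactly for those masks
`t < p` that either cause modular overflow (`p - x ≤ t`) or whose low `k` bits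
satisfy `t % 2^k < 2^k - x`. -/
theorem truncated_sign_full_fault_set (p k x : ℕ) (hp : Nat.Prime p)
    (hodd : Odd p) (hx : 0 < x) (hxk : x < 2 ^ k) (hxp : 2 * x < p) :
    ∀ t : ℕ, t < p →
      (((x + t) % p) / 2 ^ k ≤ t / 2 ^ k ↔ p - x ≤ t ∨ t % 2 ^ k < 2 ^ k - x) :=
  truncated_sign_full_fault_set_general p k x hxp
end

section
/- Let p be an odd prime and let x be an integer with 2·|x| < p. Let b ∈ ZMod p be the sign bit computed by Circa's sign test on the field encoding of x, namely b = 1 if 2·(x mod p) < p (treating x mod p as an integer in {0,…,p−1}) and b = 0 otherwise. Then in ZMod p, the product (x : ZMod p) · b equals the field encoding of ReLU(x) = max(x, 0); i.e., ((max x 0 : ℤ) : ZMod p) = (x : ZMod p) * b. In particular the comparison 'x mod p < p/2' correctly computes sign(x), and the refactoring ReLU(x) = x · sign(x) is correct in the field. -/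
/-- Correctness of Circa's ReLU refactoring: for an odd prime `p` and an integer
`x` with `2|x| < p`, let `b ∈ ZMod p` be the sign bit computed by comparing the
field representative `x % p ∈ {0,…,p-1}` against `p/2`, i.e. `b = 1` if
`2 * (x % p) < p` and `b = 0` otherwise.  Then `(x : ZMod p) * b` equals the
field encoding of `ReLU(x) = max x 0`. -/
theorem relu_refactor_correct (p : ℕ) (hp : Nat.Prime p) (hodd : Odd p)
    (x : ℤ) (hx : 2 * |x| < (p : ℤ)) :
    ((max x 0 : ℤ) : ZMod p)
      = (x : ZMod p) * (if 2 * (x % (p : ℤ)) < (p : ℤ) then 1 else 0) := by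
  have hppos : (0 : ℤ) < p := by exact_mod_cast hp.pos
  rcases le_or_gt 0 x with h | h
  · have hmod : x % (p : ℤ) = x := Int.emod_eq_of_lt h (by
      have := abs_of_nonneg h; omega)
    rw [hmod, if_pos (by have := abs_of_nonneg h; omega), mul_one,
      max_eq_left h]
  · have hmod : x % (p : ℤ) = x + p := by
      have : (x + p) % (p : ℤ) = x % p := by simp [Int.add_mul_emod_self_left]
      rw [← this]
      exact Int.emod_eq_of_lt (by have := abs_of_neg h; omega)
        (by have := abs_of_neg h; omega)
    rw [hmod, if_neg (by have := abs_of_neg h; omega), mul_zero,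
      max_eq_right h.le]
    simp
end
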